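/- arXiv:1408.0991 — 9 statements merged into one kernel-verified Lean document; each statement's English description precedes it below -/
import Mathlib

section
/- Let n ≥ 1 and let a, b, c ∈ ℤ_n, and let P(x,y) = a + b·x + c·y. Then (ℤ_n, P) is a quasigroup satisfying the unipotent law P(x,x) = P(y,y) for all x, y ∈ ℤ_n if and only if b + c = 0 in ℤ_n and both b and c are units of ℤ_n. -/
/-!
Over any ring the conditions separate. The diagonal `P(x,x) = a + (b + c) x` is constant
exactly when `b + c = 0`, and each row and column map of `P` is left multiplication by `b`
(resp. `c`) followed by a translation, hence bijective exactly when `b` (resp. `c`) is a unit.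
-/

open Function

section

variable {R : Type*} [Ring R]

theorem isUnit_iff_bijective_add_mul (k b : R) : IsUnit b ↔ Bijective (fun x : R => k + b * x) :=
  IsUnit.isUnit_iff_mulLeft_bijective.trans
    (Bijective.of_comp_iff' (AddGroup.addLeft_bijective k) _).symm

theorem forall_bijective_add_mul_add_mul_iff (a b c : R) :
    (∀ u : R, Bijective (fun x : R => a + b * x + c * u) ∧
        Bijective (fun y : R => a + b * u + c * y)) ↔ IsUnit b ∧ IsUnit c := by
  have row (u : R) : Bijective (fun x : R => a + b * x + c * u) ↔ IsUnit b := by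
    rw [isUnit_iff_bijective_add_mul (a + c * u)]
    simp only [add_right_comm a]
  have column (u : R) : Bijective (fun y : R => a + b * u + c * y) ↔ IsUnit c :=
    (isUnit_iff_bijective_add_mul _ c).symm
  simp only [row, column, forall_const]

theorem forall_add_mul_add_mul_eq_iff (a b c : R) :
    (∀ x y : R, a + b * x + c * x = a + b * y + c * y) ↔ b + c = 0 := by
  have diagonal (x : R) : a + b * x + c * x = a + (b + c) * x := by rw [add_mul, add_assoc]
  simp only [diagonal]
  exact ⟨fun h => by simpa using h 1 0, fun h x y => by simp [h]⟩

end

theorem stmt_1_general (n : ℕ) (a b c : ZMod n) :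
    ((∀ u : ZMod n, Function.Bijective (fun x : ZMod n => a + b * x + c * u) ∧
        Function.Bijective (fun y : ZMod n => a + b * u + c * y)) ∧
      (∀ x y : ZMod n, a + b * x + c * x = a + b * y + c * y)) ↔
    (b + c = 0 ∧ IsUnit b ∧ IsUnit c) := by
  rw [forall_bijective_add_mul_add_mul_iff, forall_add_mul_add_mul_eq_iff, and_comm]

/-- For `P(x,y) = a + b*x + c*y` over `ℤ_n` (`n ≥ 1`), `(ℤ_n, P)` is a unipotent
quasigroup iff `b + c = 0` and both `b` and `c` are units. -/
theorem stmt_1 (n : ℕ) (hn : 1 ≤ n) (a b c : ZMod n) :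
    ((∀ u : ZMod n, Function.Bijective (fun x : ZMod n => a + b * x + c * u) ∧
        Function.Bijective (fun y : ZMod n => a + b * u + c * y)) ∧
      (∀ x y : ZMod n, a + b * x + c * x = a + b * y + c * y)) ↔
    (b + c = 0 ∧ IsUnit b ∧ IsUnit c) :=
  stmt_1_general n a b c
end

section
/- Let n ≥ 1 and let a, b, c ∈ ℤ_n, and let P(x,y) = a + b·x + c·y. Then (ℤ_n, P) satisfies the Abel–Grassmann law P(x, P(y,z)) = P(z, P(y,x)) for all x, y, z ∈ ℤ_n if and only if c² = b in ℤ_n. -/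
/-- For `P(x,y) = a + b*x + c*y` over `ℤ_n` (`n ≥ 1`), `(ℤ_n, P)` satisfies the
Abel–Grassmann law `P(x,P(y,z)) = P(z,P(y,x))` iff `c² = b`. -/
theorem stmt_3 (n : ℕ) (hn : 1 ≤ n) (a b c : ZMod n) :
    (∀ x y z : ZMod n,
        a + b * x + c * (a + b * y + c * z) = a + b * z + c * (a + b * y + c * x)) ↔
    c ^ 2 = b := by
  constructor
  · intro h
    have := h 1 0 0
    linear_combination -this
  · intro h x y z
    linear_combination (z - x) * h
end

section
/- Let n ≥ 1 and let a, b, c ∈ ℤ_n, and let P(x,y) = a + b·x + c·y. Then (ℤ_n, P) is a quasigroup satisfying the Abel–Grassmann law P(x, P(y,z)) = P(z, P(y,x)) for all x, y, z ∈ ℤ_n if and only if c² = b in ℤ_n and both b and c are units of ℤ_n. -/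
open Function

theorem bijective_const_add_mul_iff {R : Type*} [Ring R] (e b : R) :
    Bijective (fun x : R => e + b * x) ↔ IsUnit b :=
  (Bijective.of_comp_iff' (AddGroup.addLeft_bijective e) (b * ·)).trans
    IsUnit.isUnit_iff_mulLeft_bijective.symm

theorem bijective_const_add_mul_add_iff {R : Type*} [Ring R] (e b d : R) :
    Bijective (fun x : R => e + b * x + d) ↔ IsUnit b :=
  (Bijective.of_comp_iff' (AddGroup.addRight_bijective d) (fun x => e + b * x)).trans
    (bijective_const_add_mul_iff e b)

theorem abelGrassmann_affine_iff {R : Type*} [CommRing R] (a b c : R) :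
    (∀ x y z : R, a + b * x + c * (a + b * y + c * z) = a + b * z + c * (a + b * y + c * x)) ↔
      c ^ 2 = b := by
  -- the law expands to `(b - c ^ 2) * (x - z) = 0`
  constructor
  · intro h
    linear_combination -h 1 0 0
  · rintro rfl x y z
    ring

theorem stmt_4_general (n : ℕ) (a b c : ZMod n) :
    ((∀ u : ZMod n, Function.Bijective (fun x : ZMod n => a + b * x + c * u) ∧
        Function.Bijective (fun y : ZMod n => a + b * u + c * y)) ∧
      (∀ x y z : ZMod n,
        a + b * x + c * (a + b * y + c * z) = a + b * z + c * (a + b * y + c * x))) ↔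
    (c ^ 2 = b ∧ IsUnit b ∧ IsUnit c) := by
  simp only [bijective_const_add_mul_add_iff, bijective_const_add_mul_iff, forall_const,
    abelGrassmann_affine_iff]
  exact and_comm

/-- For `P(x,y) = a + b*x + c*y` over `ℤ_n` (`n ≥ 1`), `(ℤ_n, P)` is an
Abel–Grassmann quasigroup iff `c² = b` and both `b` and `c` are units. -/
theorem stmt_4 (n : ℕ) (hn : 1 ≤ n) (a b c : ZMod n) :
    ((∀ u : ZMod n, Function.Bijective (fun x : ZMod n => a + b * x + c * u) ∧
        Function.Bijective (fun y : ZMod n => a + b * u + c * y)) ∧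
      (∀ x y z : ZMod n,
        a + b * x + c * (a + b * y + c * z) = a + b * z + c * (a + b * y + c * x))) ↔
    (c ^ 2 = b ∧ IsUnit b ∧ IsUnit c) :=
  stmt_4_general n a b c
end

section
/- Let n ≥ 1 and let a, b, c ∈ ℤ_n, and let P(x,y) = a + b·x + c·y. Then (ℤ_n, P) satisfies the external medial (paramedial) law P(P(w,x), P(y,z)) = P(P(z,x), P(y,w)) for all w, x, y, z ∈ ℤ_n if and only if b² = c² in ℤ_n. -/
/-- For `P(x,y) = a + b*x + c*y` over `ℤ_n` (`n ≥ 1`), `(ℤ_n, P)` satisfies the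
external medial (paramedial) law `P(P(w,x),P(y,z)) = P(P(z,x),P(y,w))` iff `b² = c²`. -/
theorem stmt_5 (n : ℕ) (hn : 1 ≤ n) (a b c : ZMod n) :
    (∀ w x y z : ZMod n,
        a + b * (a + b * w + c * x) + c * (a + b * y + c * z) =
          a + b * (a + b * z + c * x) + c * (a + b * y + c * w)) ↔
    b ^ 2 = c ^ 2 := by
  constructor
  · intro h
    have := h 1 0 0 0
    linear_combination this
  · intro h w x y z
    linear_combination (w - z) * h
end

section
/- Let p be a prime and let a, b, c ∈ ℤ_p with a ≠ 0, b ≠ 0 and c ≠ 0, and let P(x,y) = a + b·x + c·y. Then the quasigroup (ℤ_p, P) has the cross inverse property — that is, for all x, y, e, r ∈ ℤ_p, if P(x,e) = x and P(x,r) = e then P(P(x,y), r) = y — if and only if b·c = 1 in ℤ_p. -/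
/-- For `P(x,y) = a + b*x + c*y` over `ℤ_p` (`p` prime, `a ≠ 0`, `b ≠ 0`, `c ≠ 0`),
the quasigroup `(ℤ_p, P)` has the cross inverse property iff `b*c = 1`. -/
theorem stmt_7 (p : ℕ) (hp : p.Prime) (a b c : ZMod p)
    (ha : a ≠ 0) (hb : b ≠ 0) (hc : c ≠ 0) :
    (∀ x y e r : ZMod p,
        a + b * x + c * e = x → a + b * x + c * r = e →
          a + b * (a + b * x + c * y) + c * r = y) ↔
    b * c = 1 := by
  haveI : Fact p.Prime := ⟨hp⟩
  constructor
  · intro H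
    set e : ZMod p := -a * c⁻¹ with he_def
    set r : ZMod p := (e - a) * c⁻¹ with hr_def
    have hcc : c * c⁻¹ = 1 := mul_inv_cancel₀ hc
    have he : a + b * 0 + c * e = 0 := by
      rw [he_def]; field_simp; ring
    have hr : a + b * 0 + c * r = e := by
      rw [hr_def, he_def]; field_simp; ring
    have h0 := H 0 0 e r he hr
    have h1 := H 0 1 e r he hr
    linear_combination h1 - h0
  · intro h x y e r he hr
    linear_combination hr + b * he + (y - e) * h
end

section
/- Let n ≥ 1 and let a, b, c ∈ ℤ_n with a ≠ 0 and c a unit of ℤ_n, and let P(x,y) = a + b·x + c·y. Then the groupoid (ℤ_n, P) has the cross inverse property — that is, for all x, y, e, r ∈ ℤ_n, if P(x,e) = x and P(x,r) = e then P(P(x,y), r) = y — if and only if b·c = 1 in ℤ_n. -/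
/-- For `P(x,y) = a + b*x + c*y` over `ℤ_n` (`n ≥ 1`, `a ≠ 0`, `c` a unit),
the groupoid `(ℤ_n, P)` has the cross inverse property iff `b*c = 1`. -/
theorem stmt_8 (n : ℕ) (hn : 1 ≤ n) (a b c : ZMod n)
    (ha : a ≠ 0) (hc : IsUnit c) :
    (∀ x y e r : ZMod n,
        a + b * x + c * e = x → a + b * x + c * r = e →
          a + b * (a + b * x + c * y) + c * r = y) ↔
    b * c = 1 := by
  obtain ⟨u, rfl⟩ := hc
  constructor
  · intro H
    set e : ZMod n := ↑u⁻¹ * (-a) with he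
    set r : ZMod n := ↑u⁻¹ * (e - a) with hr
    have h1 : a + b * 0 + ↑u * e = (0 : ZMod n) := by
      have key : (↑u : ZMod n) * ↑u⁻¹ = 1 := u.mul_inv
      rw [he]; linear_combination (-a) * key
    have h2 : a + b * 0 + ↑u * r = e := by
      have key : (↑u : ZMod n) * ↑u⁻¹ = 1 := u.mul_inv
      rw [hr]; linear_combination (e - a) * key
    have H0 := H 0 0 e r h1 h2
    have H1 := H 0 1 e r h1 h2
    linear_combination H1 - H0
  · intro hbc x y e r h1 h2
    linear_combination b * h1 + h2 + (y - e) * hbc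
end

section
/- Let n ≥ 1 and let a, b, c ∈ ℤ_n, and let P(x,y) = a + b·x + c·y. Then b and c are units of ℤ_n and (ℤ_n, P) satisfies the law of right permutability P(P(x,y), z) = P(P(x,z), y) for all x, y, z ∈ ℤ_n, if and only if b = 1 in ℤ_n and c is a unit of ℤ_n. -/
/-- For `P(x,y) = a + b*x + c*y` over `ℤ_n` (`n ≥ 1`): `b` and `c` are units and
`(ℤ_n, P)` satisfies right permutability `P(P(x,y),z) = P(P(x,z),y)` iff
`b = 1` and `c` is a unit. -/
theorem stmt_13 (n : ℕ) (hn : 1 ≤ n) (a b c : ZMod n) :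
    (IsUnit b ∧ IsUnit c ∧
      (∀ x y z : ZMod n,
        a + b * (a + b * x + c * y) + c * z = a + b * (a + b * x + c * z) + c * y)) ↔
    (b = 1 ∧ IsUnit c) := by
  constructor
  · rintro ⟨hb, hc, h⟩
    refine ⟨?_, hc⟩
    have h1 := h 0 1 0
    have hbc : c * b = c * 1 := by ring_nf; ring_nf at h1; linear_combination h1
    exact hc.mul_left_cancel hbc
  · rintro ⟨hb, hc⟩
    exact ⟨hb ▸ isUnit_one, hc, fun x y z => by subst hb; ring⟩
end

section
/- Let n ≥ 1 and let a, b, c ∈ ℤ_n, and let P(x,y) = a + b·x + c·y. Then (ℤ_n, P) always satisfies the E_l law: for all x, y, z, f ∈ ℤ_n, if P(f,x) = x then P(x, P(y,z)) = P(P(f,y), P(x,z)). -/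
/-- For `P(x,y) = a + b*x + c*y` over `ℤ_n` (`n ≥ 1`), `(ℤ_n, P)` always
satisfies the `E_l` law: if `P(f,x) = x` then
`P(x,P(y,z)) = P(P(f,y),P(x,z))`. -/
theorem stmt_17 (n : ℕ) (hn : 1 ≤ n) (a b c : ZMod n) :
    ∀ x y z f : ZMod n, a + b * f + c * x = x →
      a + b * x + c * (a + b * y + c * z) =
        a + b * (a + b * f + c * y) + c * (a + b * x + c * z) := by
  intro x y z f h
  linear_combination (-b) * h
end

section
/- Let p be a prime and let a, b, c ∈ ℤ_p with a = 0, b ≠ 0 and c ≠ 0, and let P(x,y) = b·x + c·y. Then (ℤ_p, P) satisfies the right weak inverse property — that is, for all x, y, e₁, r₁, e₂, r₂ ∈ ℤ_p, if P(P(y,x), e₁) = P(y,x), P(P(y,x), r₁) = e₁, P(y, e₂) = y and P(y, r₂) = e₂, then P(x, r₁) = r₂ — if and only if b·c = 1 in ℤ_p. -/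
/-!
For `z ∘ w = b z + c w` with `c` invertible, the local right identity and the right inverse
are linear in `z`: `e(z) = (1 - b) c⁻¹ z` and `z^ρ = k z` with `k = (1 - b - b c) c⁻²`.
The weak inverse property `x ∘ (y ∘ x)^ρ = y^ρ` then reads `(b + c² k) x + b c k y = k y`,
and `b + c² k = 1 - b c`; when `b c = 1` the `y`-coefficients agree as well.
-/

section

variable {K : Type*} [Field K]

/-- The right weak inverse property of `(K, (x, y) ↦ b x + c y)`; `e₁, r₁` are the local right
identity and right inverse of `y ∘ x`, and `e₂, r₂` those of `y`. -/
def LinearRightWIP (b c : K) : Prop :=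
  ∀ x y e₁ r₁ e₂ r₂ : K,
    b * (b * y + c * x) + c * e₁ = b * y + c * x →
    b * (b * y + c * x) + c * r₁ = e₁ →
    b * y + c * e₂ = y →
    b * y + c * r₂ = e₂ →
    b * x + c * r₁ = r₂

theorem LinearRightWIP.mul_eq_one {b c : K} (hc : c ≠ 0) (h : LinearRightWIP b c) :
    b * c = 1 := by
  -- `x = 1`, `y = 0`: then `y ∘ x = c`, `e₁ = 1 - b` and `y^ρ = 0`.
  have h₁ := h 1 0 (1 - b) ((1 - b - b * c) / c) 0 0
    (by ring) (by field_simp; ring) (by ring) (by ring)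
  field_simp at h₁
  linear_combination -h₁

theorem linearRightWIP_of_mul_eq_one {b c : K} (hc : c ≠ 0) (hbc : b * c = 1) :
    LinearRightWIP b c := by
  intro x y e₁ r₁ e₂ r₂ h₁ h₂ h₃ h₄
  have key : c * (b * x + c * r₁) = c * r₂ := by
    linear_combination c * h₂ + h₁ - h₄ - b * h₃ + (e₂ - b * y - c * x) * hbc
  exact mul_left_cancel₀ hc key

theorem linearRightWIP_iff {b c : K} (hc : c ≠ 0) : LinearRightWIP b c ↔ b * c = 1 :=
  ⟨LinearRightWIP.mul_eq_one hc, linearRightWIP_of_mul_eq_one hc⟩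

end

theorem stmt_19_general (p : ℕ) (hp : p.Prime) (b c : ZMod p) (hc : c ≠ 0) :
    (∀ x y e₁ r₁ e₂ r₂ : ZMod p,
        b * (b * y + c * x) + c * e₁ = b * y + c * x →
        b * (b * y + c * x) + c * r₁ = e₁ →
        b * y + c * e₂ = y →
        b * y + c * r₂ = e₂ →
        b * x + c * r₁ = r₂) ↔
    b * c = 1 := by
  have : Fact p.Prime := ⟨hp⟩
  exact linearRightWIP_iff hc

/-- For `P(x,y) = b*x + c*y` over `ℤ_p` (`p` prime, `a = 0`, `b ≠ 0`, `c ≠ 0`),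
the quasigroup `(ℤ_p, P)` has the right weak inverse property
`x·(y·x)^ρ = y^ρ` iff `b*c = 1`. -/
theorem stmt_19 (p : ℕ) (hp : p.Prime) (b c : ZMod p) (hb : b ≠ 0) (hc : c ≠ 0) :
    (∀ x y e₁ r₁ e₂ r₂ : ZMod p,
        b * (b * y + c * x) + c * e₁ = b * y + c * x →
        b * (b * y + c * x) + c * r₁ = e₁ →
        b * y + c * e₂ = y →
        b * y + c * r₂ = e₂ →
        b * x + c * r₁ = r₂) ↔
    b * c = 1 :=
  stmt_19_general p hp b c hc
end
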